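/- arXiv:1912.11710 — 3 statements merged into one kernel-verified Lean document; each statement's English description precedes it below -/
import Mathlib

section
/- Let n ≥ 5 be an integer. There exists an n-element commutative ring with unit possessing a quartet if and only if n is not a prime congruent to 3 modulo 4 and n is not twice such a prime. -/
/-- A quartet in a commutative ring with unit: a 4-element subgroup of the group of
units consisting of two distinct elements and their negatives. -/
def IsQuartet {R : Type*} [CommRing R] (G : Subgroup Rˣ) : Prop :=
  Nat.card G = 4 ∧ ∃ a b : Rˣ, a ≠ b ∧ (G : Set Rˣ) = {a, b, -a, -b}

lemma quartet_of_unit {R : Type} [CommRing R] (u : Rˣ)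
    (hsq : u * u = 1 ∨ u * u = -1) (h1 : u ≠ 1) (h2 : u ≠ -1) (hne : (1 : Rˣ) ≠ -1) :
    ∃ G : Subgroup Rˣ, IsQuartet G := by
  have hnu : u ≠ -u := by
    intro h
    apply hne
    have := congrArg (fun x => u⁻¹ * x) h
    simpa [mul_neg] using this
  have h1u : (1 : Rˣ) ≠ -u := by
    intro h; exact h2 (by rw [← neg_neg u, ← h])
  have hm1u : (-1 : Rˣ) ≠ -u := by
    intro h; exact h1 (by simpa using (congrArg Neg.neg h).symm)
  refine ⟨{ carrier := {1, u, -1, -u},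
            one_mem' := by simp,
            mul_mem' := ?_,
            inv_mem' := ?_ }, ?_, 1, u, h1.symm, ?_⟩
  · rintro a b (rfl | rfl | rfl | rfl) (rfl | rfl | rfl | rfl) <;>
      rcases hsq with h | h <;>
      simp_all [Set.mem_insert_iff, neg_mul, mul_neg, neg_neg, h]
  · have hinv : u⁻¹ = u ∨ u⁻¹ = -u := by
      rcases hsq with h | h
      · exact Or.inl (inv_eq_of_mul_eq_one_right h)
      · exact Or.inr (inv_eq_of_mul_eq_one_right (by rw [mul_neg, h, neg_neg]))
    rintro a (rfl | rfl | rfl | rfl) <;>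
      rcases hinv with h | h <;>
      simp [Set.mem_insert_iff, inv_neg, h]
  · have : (({1, u, -1, -u} : Set Rˣ)).ncard = 4 := by
      rw [Set.ncard_insert_of_notMem (by simp [h1.symm, hne, h1u])
            (((Set.finite_singleton _).insert _).insert _),
          Set.ncard_insert_of_notMem (by simp [h2, hnu]) ((Set.finite_singleton _).insert _),
          Set.ncard_insert_of_notMem (by simp [hm1u]) (Set.finite_singleton _),
          Set.ncard_singleton]
    rw [← this, ← Nat.card_coe_set_eq]
    rfl
  · show ({1, u, -1, -u} : Set Rˣ) = {1, u, -1, -u}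
    rfl

lemma quartet_of_sqrt {R : Type} [CommRing R] (x : R) (hx : x * x = -1) (h : (1:R) ≠ -1) :
    ∃ G : Subgroup Rˣ, IsQuartet G := by
  refine quartet_of_unit ⟨x, -x, by rw [mul_neg, hx, neg_neg], by rw [neg_mul, hx, neg_neg]⟩
    (Or.inr (by ext; simpa using hx)) ?_ ?_ ?_
  · intro hu
    have : x = 1 := congrArg Units.val hu
    rw [this, mul_one] at hx; exact h hx
  · intro hu
    have : x = -1 := congrArg Units.val hu
    rw [this] at hx; simp at hx; exact h hx
  · intro hu
    have : (1 : R) = -1 := congrArg Units.val hu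
    exact h this

lemma neg_one_ne_one_zmod {s : ℕ} (hs : 3 ≤ s) : (1 : ZMod s) ≠ -1 := by
  have : NeZero s := ⟨by omega⟩
  intro h
  have h2 : ((2:ℕ) : ZMod s) = 0 := by push_cast; linear_combination h
  have := (CharP.cast_eq_zero_iff (ZMod s) s 2).mp h2
  have := Nat.le_of_dvd (by norm_num) this
  omega

lemma klein {r s : ℕ} (hr : 3 ≤ r) (hs : 3 ≤ s) :
    ∃ G : Subgroup (ZMod r × ZMod s)ˣ, IsQuartet G := by
  have : NeZero r := ⟨by omega⟩
  have : NeZero s := ⟨by omega⟩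
  refine quartet_of_unit ⟨((1 : ZMod r), (-1 : ZMod s)), (1, -1), by simp [Prod.ext_iff],
      by simp [Prod.ext_iff]⟩ (Or.inl (by ext <;> simp [Prod.ext_iff])) ?_ ?_ ?_
  · intro hu
    have : ((1 : ZMod r), (-1 : ZMod s)) = (1, 1) := congrArg Units.val hu
    exact neg_one_ne_one_zmod hs (congrArg Prod.snd this).symm
  · intro hu
    have : ((1 : ZMod r), (-1 : ZMod s)) = (-1, -1) := congrArg Units.val hu
    exact neg_one_ne_one_zmod hr (congrArg Prod.fst this)
  · intro hu
    have : ((1 : ZMod r), (1 : ZMod s)) = (-1, -1) := congrArg Units.val hu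
    exact neg_one_ne_one_zmod hr (congrArg Prod.fst this)

lemma forward_aux {R : Type} [CommRing R] [Fintype R] (m : ℕ) [NeZero m] [CharP R m]
    (hcard : Fintype.card R = m) (G : Subgroup Rˣ) (h4 : Nat.card ↥G = 4) :
    4 ∣ m.totient := by
  have hbij : Function.Bijective (ZMod.castHom (dvd_refl m) R) :=
    (Fintype.bijective_iff_injective_and_card _).mpr
      ⟨ZMod.castHom_injective R, by rw [ZMod.card, hcard]⟩
  let e : ZMod m ≃+* R := RingEquiv.ofBijective _ hbij
  let e' : (ZMod m)ˣ ≃* Rˣ := Units.mapEquiv e.toMulEquiv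
  have hcu : Nat.card Rˣ = m.totient := by
    rw [← Nat.card_congr e'.toEquiv, Nat.card_eq_fintype_card, ZMod.card_units_eq_totient]
  have hdvd := Subgroup.card_subgroup_dvd_card G
  rw [h4, hcu] at hdvd
  exact hdvd

theorem exists_ring_with_quartet_iff (n : ℕ) (hn : 5 ≤ n) :
    (∃ (R : Type) (_ : CommRing R) (_ : Fintype R),
        Fintype.card R = n ∧ ∃ G : Subgroup Rˣ, IsQuartet G) ↔
    ¬ ((n.Prime ∧ n % 4 = 3) ∨ (∃ p : ℕ, p.Prime ∧ p % 4 = 3 ∧ n = 2 * p)) := by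
  constructor
  · rintro ⟨R, _inst1, _inst2, hcard, G, hGq⟩ h
    obtain ⟨hG4, -⟩ := hGq
    have hnt : Nontrivial R := Fintype.one_lt_card_iff_nontrivial.mp (by omega)
    have hcast : ((n : ℕ) : R) = 0 := by rw [← hcard]; exact Nat.cast_card_eq_zero R
    haveI : CharP R (ringChar R) := ringChar.charP R
    rcases h with ⟨hp, hp3⟩ | ⟨p, hp, hp3, rfl⟩
    · have hchar : ringChar R = n := by
        rcases hp.eq_one_or_self_of_dvd _ (ringChar.dvd hcast) with h | h
        · exact absurd h CharP.ringChar_ne_one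
        · exact h
      haveI : CharP R n := hchar ▸ ringChar.charP R
      haveI : NeZero n := ⟨by omega⟩
      have ht := forward_aux n hcard G hG4
      rw [Nat.totient_prime hp] at ht
      obtain ⟨k, hk⟩ := ht
      omega
    · haveI : Fact p.Prime := ⟨hp⟩
      obtain ⟨x, hx⟩ := exists_prime_addOrderOf_dvd_card (G := R) p
        (by rw [hcard]; exact ⟨2, by ring⟩)
      obtain ⟨y, hy⟩ := exists_prime_addOrderOf_dvd_card (G := R) 2
        (by rw [hcard]; exact ⟨p, rfl⟩)
      have hdvd : ringChar R ∣ 2 * p := ringChar.dvd hcast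
      have h2d : 2 ∣ ringChar R := by
        by_contra hc
        have hcop : Nat.Coprime (ringChar R) 2 := (Nat.prime_two.coprime_iff_not_dvd.mpr hc).symm
        have hdp : ringChar R ∣ p := hcop.dvd_of_dvd_mul_left hdvd
        have hpR : ((p:ℕ) : R) = 0 := (CharP.cast_eq_zero_iff R (ringChar R) p).mpr hdp
        have h2p : addOrderOf y ∣ p := addOrderOf_dvd_of_nsmul_eq_zero
          (by rw [nsmul_eq_mul, hpR, zero_mul])
        rw [hy] at h2p
        omega
      have hpd : p ∣ ringChar R := by
        by_contra hc
        have hcop : Nat.Coprime (ringChar R) p :=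
          ((Nat.Prime.coprime_iff_not_dvd hp).mpr hc).symm
        have hd2 : ringChar R ∣ 2 := hcop.dvd_of_dvd_mul_right hdvd
        have h2R : ((2:ℕ) : R) = 0 := (CharP.cast_eq_zero_iff R (ringChar R) 2).mpr hd2
        have hpp : addOrderOf x ∣ 2 := addOrderOf_dvd_of_nsmul_eq_zero
          (by rw [nsmul_eq_mul, h2R, zero_mul])
        rw [hx] at hpp
        have := Nat.le_of_dvd (by norm_num) hpp
        omega
      have hcop2p : Nat.Coprime 2 p := (Nat.coprime_primes Nat.prime_two hp).mpr (by omega)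
      have hdeq : ringChar R = 2 * p :=
        Nat.dvd_antisymm hdvd (hcop2p.mul_dvd_of_dvd_of_dvd h2d hpd)
      haveI : CharP R (2 * p) := hdeq ▸ ringChar.charP R
      haveI : NeZero (2 * p) := ⟨by omega⟩
      have ht := forward_aux (2 * p) hcard G hG4
      rw [Nat.totient_mul hcop2p, Nat.totient_two, one_mul, Nat.totient_prime hp] at ht
      obtain ⟨k, hk⟩ := ht
      omega
  · intro h
    push_neg at h
    obtain ⟨hA, hB⟩ := h
    by_cases h4 : 4 ∣ n
    · obtain ⟨j, rfl⟩ := h4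
      by_cases hj : j = 2
      · subst hj
        refine ⟨ZMod 8, inferInstance, inferInstance, by rw [ZMod.card], ?_⟩
        refine quartet_of_unit (⟨3, 3, by decide, by decide⟩ : (ZMod 8)ˣ)
          (Or.inl (by rw [Units.ext_iff]; decide)) (by rw [Ne, Units.ext_iff]; decide)
          (by rw [Ne, Units.ext_iff]; decide) (by rw [Ne, Units.ext_iff]; decide)
      · haveI : NeZero j := ⟨by omega⟩
        have hj3 : 3 ≤ j := by omega
        refine ⟨ZMod 4 × ZMod j, inferInstance, inferInstance, ?_, klein (by norm_num) hj3⟩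
        rw [Fintype.card_prod, ZMod.card, ZMod.card]
    · by_cases h2 : 2 ∣ n
      · obtain ⟨m, rfl⟩ := h2
        have hmodd : m % 2 = 1 := by omega
        have hm3 : 3 ≤ m := by omega
        by_cases hmp : m.Prime
        · have hm4 : m % 4 ≠ 3 := fun h3 => hB m hmp h3 rfl
          haveI : Fact m.Prime := ⟨hmp⟩
          obtain ⟨y, hy⟩ := (ZMod.exists_sq_eq_neg_one_iff (p := m)).mpr hm4
          refine ⟨ZMod 2 × ZMod m, inferInstance, inferInstance, ?_, ?_⟩
          · rw [Fintype.card_prod, ZMod.card, ZMod.card]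
          · refine quartet_of_sqrt ((1 : ZMod 2), y) ?_ ?_
            · have e1 : ((1 : ZMod 2), y) * (1, y) = (1 * 1, y * y) := rfl
              have e2 : (-1 : ZMod 2 × ZMod m) = (-1, -1) := rfl
              rw [e1, e2, Prod.mk.injEq]
              exact ⟨by decide, by simpa using hy.symm⟩
            · intro hu
              exact neg_one_ne_one_zmod hm3 (congrArg Prod.snd hu)
        · set r := m.minFac with hr
          have hrp : r.Prime := Nat.minFac_prime (by omega)
          obtain ⟨s, hs⟩ := m.minFac_dvd
          have hr2 : r ≠ 2 := by
            intro h2'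
            have : (2:ℕ) ∣ m := h2' ▸ m.minFac_dvd
            omega
          have hr3 : 3 ≤ r := by have := hrp.two_le; omega
          have hs1 : s ≠ 1 := by
            intro h1'
            rw [h1', mul_one] at hs
            exact hmp (by rw [hs]; exact hrp)
          have hs2 : ¬ (2:ℕ) ∣ s := by
            intro hds
            exact absurd (hs ▸ hds.mul_left r) (by omega)
          have hs3 : 3 ≤ s := by
            have hs0 : s ≠ 0 := by rintro rfl; omega
            omega
          have : NeZero (2 * r) := ⟨by omega⟩
          have : NeZero s := ⟨by omega⟩
          refine ⟨ZMod (2 * r) × ZMod s, inferInstance, inferInstance, ?_,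
            klein (by omega) hs3⟩
          rw [Fintype.card_prod, ZMod.card, ZMod.card, hs]
          ring
      · by_cases hnp : n.Prime
        · have hn4 : n % 4 ≠ 3 := fun h3 => hA hnp h3
          haveI : Fact n.Prime := ⟨hnp⟩
          obtain ⟨y, hy⟩ := (ZMod.exists_sq_eq_neg_one_iff (p := n)).mpr hn4
          refine ⟨ZMod n, inferInstance, inferInstance, ZMod.card n,
            quartet_of_sqrt y (by simpa using hy.symm) (neg_one_ne_one_zmod (by omega))⟩
        · set r := n.minFac with hr
          have hrp : r.Prime := Nat.minFac_prime (by omega)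
          obtain ⟨s, hs⟩ := n.minFac_dvd
          have hr2 : r ≠ 2 := by
            intro h2'
            exact h2 (h2' ▸ n.minFac_dvd)
          have hr3 : 3 ≤ r := by have := hrp.two_le; omega
          have hs1 : s ≠ 1 := by
            intro h1'
            rw [h1', mul_one] at hs
            exact hnp (by rw [hs]; exact hrp)
          have hs2 : ¬ (2:ℕ) ∣ s := by
            intro hds
            exact h2 (hs ▸ hds.mul_left r)
          have hs3 : 3 ≤ s := by
            have hs0 : s ≠ 0 := by rintro rfl; omega
            omega
          have : NeZero r := ⟨by omega⟩
          have : NeZero s := ⟨by omega⟩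
          refine ⟨ZMod r × ZMod s, inferInstance, inferInstance, ?_, klein hr3 hs3⟩
          rw [Fintype.card_prod, ZMod.card, ZMod.card, hs]
end

section
/- Let R be an n-element commutative ring with unit containing a quartet G, let c, d ∈ G be distinct with c ≠ -d, and let z₁, …, zₙ be a reflectable enumeration of R (i.e., u - z_i = z_{n-i+1} for all i, for the fixed element u). Define the n×n matrix M by M(i,j) = c·z_i + d·z_j. Then M is a Latin square and its 4n lines (rows, columns, reverse rows, reverse columns) are pairwise distinct sequences. -/
lemma quartet_two_ne {R : Type*} [CommRing R] {G : Subgroup Rˣ} (hG : IsQuartet G)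
    {g : Rˣ} (hg : g ∈ G) : (g : R) + g ≠ 0 := by
  obtain ⟨hcard, a, b, hab, hset⟩ := hG
  intro h
  have hgg : g = -g := Units.ext (by
    rw [Units.val_neg]; exact eq_neg_of_add_eq_zero_left h)
  have h4 : (G : Set Rˣ).ncard = 4 := by
    rw [← Nat.card_coe_set_eq]; exact hcard
  rw [hset] at h4
  have hg' : g ∈ ({a, b, -a, -b} : Set Rˣ) := by rw [← hset]; exact hg
  have key : a = -a ∨ b = -b := by
    simp only [Set.mem_insert_iff, Set.mem_singleton_iff] at hg'
    rcases hg' with rfl | rfl | rfl | rfl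
    · exact Or.inl hgg
    · exact Or.inr hgg
    · exact Or.inl (neg_injective hgg)
    · exact Or.inr (neg_injective hgg)
  have small : ∀ x y w : Rˣ, ({x, y, w} : Set Rˣ).ncard ≤ 3 := by
    intro x y w
    calc ({x, y, w} : Set Rˣ).ncard ≤ ({y, w} : Set Rˣ).ncard + 1 := Set.ncard_insert_le _ _
      _ ≤ (({w} : Set Rˣ).ncard + 1) + 1 := by gcongr; exact Set.ncard_insert_le _ _
      _ = 3 := by rw [Set.ncard_singleton]
  rcases key with ha | hb
  · have : ({a, b, -a, -b} : Set Rˣ) = {a, b, -b} := by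
      rw [← ha]; ext x; simp; tauto
    rw [this] at h4
    have := small a b (-b); omega
  · have : ({a, b, -a, -b} : Set Rˣ) = {a, b, -a} := by
      rw [← hb]; ext x; simp; tauto
    rw [this] at h4
    have := small a b (-a); omega

theorem strongly_asymmetric_latin_square_of_quartet {R : Type*} [CommRing R] [Fintype R]
    (n : ℕ) (hcard : Fintype.card R = n) (G : Subgroup Rˣ) (hG : IsQuartet G)
    (c d : Rˣ) (hc : c ∈ G) (hd : d ∈ G) (hcd : c ≠ d) (hcnd : c ≠ -d)
    (u : R) (hu : ∀ x y : R, x + x = u → y + y = u → x = y)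
    (z : Fin n ≃ R) (hz : ∀ i : Fin n, u - z i = z i.rev) :
    let M : Fin n → Fin n → R := fun i j => (c : R) * z i + (d : R) * z j
    (∀ i : Fin n, Function.Bijective (fun j => M i j)) ∧
    (∀ j : Fin n, Function.Bijective (fun i => M i j)) ∧
    Set.ncard ({f : Fin n → R | ∃ i, f = fun j => M i j} ∪
               {f : Fin n → R | ∃ i, f = fun j => M j i} ∪
               {f : Fin n → R | ∃ i, f = fun j => M i j.rev} ∪
               {f : Fin n → R | ∃ i, f = fun j => M j.rev i}) = 4 * n := by
  intro M
  have hrev : ∀ j : Fin n, z j.rev = u - z j := fun j => (hz j).symm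
  have hcdR : (c : R) ≠ d := fun h => hcd (Units.ext h)
  have hcndR : (c : R) + d ≠ 0 := fun h => hcnd (Units.ext (by
    rw [Units.val_neg]; exact eq_neg_of_add_eq_zero_left h))
  have h2c : (c : R) + c ≠ 0 := quartet_two_ne ⟨hG.1, hG.2⟩ hc
  have h2d : (d : R) + d ≠ 0 := quartet_two_ne ⟨hG.1, hG.2⟩ hd
  -- the four families
  set A : Set (Fin n → R) := {f | ∃ i, f = fun j => M i j} with hA
  set B : Set (Fin n → R) := {f | ∃ i, f = fun j => M j i} with hB
  set C : Set (Fin n → R) := {f | ∃ i, f = fun j => M i j.rev} with hC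
  set D : Set (Fin n → R) := {f | ∃ i, f = fun j => M j.rev i} with hD
  have hMdef : ∀ i j, M i j = (c : R) * z i + (d : R) * z j := fun i j => rfl
  -- injectivity of c*· and d*· composed with z
  have zinj : Function.Injective z := z.injective
  refine ⟨?_, ?_, ?_⟩
  · intro i
    rw [Fintype.bijective_iff_injective_and_card]
    constructor
    · intro j j' h
      simp only [hMdef] at h
      exact zinj (d.isUnit.mul_right_injective (add_left_cancel h))
    · simp [hcard]
  · intro j
    rw [Fintype.bijective_iff_injective_and_card]
    constructor
    · intro i i' h
      simp only [hMdef] at h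
      have := add_right_cancel h
      exact zinj (c.isUnit.mul_right_injective this)
    · simp [hcard]
  · -- the counting part
    have hrangeA : A = Set.range (fun i => fun j => M i j) := by
      ext f; simp [hA, eq_comm]
    have hrangeB : B = Set.range (fun i => fun j => M j i) := by
      ext f; simp [hB, eq_comm]
    have hrangeC : C = Set.range (fun i => fun j => M i j.rev) := by
      ext f; simp [hC, eq_comm]
    have hrangeD : D = Set.range (fun i => fun j => M j.rev i) := by
      ext f; simp [hD, eq_comm]
    have hrank : ∀ g : Fin n → (Fin n → R), Function.Injective g →
        (Set.range g).ncard = n := by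
      intro g hg
      rw [← Set.image_univ, Set.ncard_image_of_injective _ hg, Set.ncard_univ]
      simp
    -- evaluation points
    have hfin : ∀ s : Set (Fin n → R), s.Finite := fun s => Set.toFinite s
    have key : ∀ x : R, ∃ j : Fin n, z j = x := fun x => ⟨z.symm x, z.apply_symm_apply x⟩
    -- injectivity of the four families
    have injA : Function.Injective (fun i => fun j : Fin n => M i j) := by
      intro i i' h
      have := congrFun h i
      simp only [hMdef] at this
      exact zinj (c.isUnit.mul_right_injective (add_right_cancel this))
    have injB : Function.Injective (fun i => fun j : Fin n => M j i) := by
      intro i i' h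
      have := congrFun h i
      simp only [hMdef] at this
      exact zinj (d.isUnit.mul_right_injective (add_left_cancel this))
    have injC : Function.Injective (fun i => fun j : Fin n => M i j.rev) := by
      intro i i' h
      have := congrFun h i
      simp only [hMdef] at this
      exact zinj (c.isUnit.mul_right_injective (add_right_cancel this))
    have injD : Function.Injective (fun i => fun j : Fin n => M j.rev i) := by
      intro i i' h
      have := congrFun h i
      simp only [hMdef] at this
      exact zinj (d.isUnit.mul_right_injective (add_left_cancel this))
    -- disjointness: generic scheme via evaluation at z.symm 0 and z.symm 1
    obtain ⟨j0, hj0⟩ := key 0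
    obtain ⟨j1, hj1⟩ := key 1
    have dAB : Disjoint A B := by
      rw [Set.disjoint_left]
      rintro f ⟨i, rfl⟩ ⟨i', h⟩
      have h0 := congrFun h j0
      have h1 := congrFun h j1
      simp only [hMdef, hj0, hj1] at h0 h1
      exact hcdR (by linear_combination h0 - h1)
    have dAC : Disjoint A C := by
      rw [Set.disjoint_left]
      rintro f ⟨i, rfl⟩ ⟨i', h⟩
      have h0 := congrFun h j0
      have h1 := congrFun h j1
      simp only [hMdef, hrev, hj0, hj1] at h0 h1
      exact h2d (by linear_combination h1 - h0)
    have dAD : Disjoint A D := by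
      rw [Set.disjoint_left]
      rintro f ⟨i, rfl⟩ ⟨i', h⟩
      have h0 := congrFun h j0
      have h1 := congrFun h j1
      simp only [hMdef, hrev, hj0, hj1] at h0 h1
      exact hcndR (by linear_combination h1 - h0)
    have dBC : Disjoint B C := by
      rw [Set.disjoint_left]
      rintro f ⟨i, rfl⟩ ⟨i', h⟩
      have h0 := congrFun h j0
      have h1 := congrFun h j1
      simp only [hMdef, hrev, hj0, hj1] at h0 h1
      exact hcndR (by linear_combination h1 - h0)
    have dBD : Disjoint B D := by
      rw [Set.disjoint_left]
      rintro f ⟨i, rfl⟩ ⟨i', h⟩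
      have h0 := congrFun h j0
      have h1 := congrFun h j1
      simp only [hMdef, hrev, hj0, hj1] at h0 h1
      exact h2c (by linear_combination h1 - h0)
    have dCD : Disjoint C D := by
      rw [Set.disjoint_left]
      rintro f ⟨i, rfl⟩ ⟨i', h⟩
      have h0 := congrFun h j0
      have h1 := congrFun h j1
      simp only [hMdef, hrev, hj0, hj1] at h0 h1
      exact hcdR (by linear_combination h1 - h0)
    have cA : A.ncard = n := by rw [hrangeA]; exact hrank _ injA
    have cB : B.ncard = n := by rw [hrangeB]; exact hrank _ injB
    have cC : C.ncard = n := by rw [hrangeC]; exact hrank _ injC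
    have cD : D.ncard = n := by rw [hrangeD]; exact hrank _ injD
    rw [Set.ncard_union_eq (by
        rw [Set.disjoint_union_left, Set.disjoint_union_left]
        exact ⟨⟨dAD, dBD⟩, dCD⟩) (hfin _) (hfin _),
      Set.ncard_union_eq (by
        rw [Set.disjoint_union_left]
        exact ⟨dAC, dBC⟩) (hfin _) (hfin _),
      Set.ncard_union_eq dAB (hfin _) (hfin _), cA, cB, cC, cD]
    ring
end

section
/- Let n > 1 be odd and let L be a Latin square of order n. If L is symmetric (L = Lᵀ) or Hankel symmetric (L = JLᵀJ where J is the reversal matrix), then L has exactly 2n distinct lines. Conversely, if L has exactly 2n distinct lines, then L is symmetric or Hankel symmetric. -/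
theorem odd_latin_square_two_n_lines_iff_symmetric {α : Type*} [Fintype α]
    (n : ℕ) (hcard : Fintype.card α = n) (hn : 1 < n) (hodd : Odd n)
    (L : Fin n → Fin n → α)
    (hrow : ∀ i, Function.Bijective (fun j => L i j))
    (hcol : ∀ j, Function.Bijective (fun i => L i j)) :
    Set.ncard ({f : Fin n → α | ∃ i, f = fun j => L i j} ∪
               {f : Fin n → α | ∃ j, f = fun i => L i j} ∪
               {f : Fin n → α | ∃ i, f = fun j => L i j.rev} ∪
               {f : Fin n → α | ∃ j, f = fun i => L i.rev j}) = 2 * n ↔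
    ((∀ i j, L i j = L j i) ∨ (∀ i j, L i j = L j.rev i.rev)) := by
  obtain ⟨k, hk⟩ := hodd
  set S1 : Set (Fin n → α) := {f : Fin n → α | ∃ i, f = fun j => L i j} with hS1
  set S2 : Set (Fin n → α) := {f : Fin n → α | ∃ j, f = fun i => L i j} with hS2
  set S3 : Set (Fin n → α) := {f : Fin n → α | ∃ i, f = fun j => L i j.rev} with hS3
  set S4 : Set (Fin n → α) := {f : Fin n → α | ∃ j, f = fun i => L i.rev j} with hS4
  have hn0 : 0 < n := by omega
  set z0 : Fin n := ⟨0, hn0⟩ with hz0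
  set m : Fin n := ⟨n / 2, by omega⟩ with hmdef
  have hvrev : ∀ j : Fin n, (Fin.rev j).val = n - 1 - j.val := by
    intro j
    rw [Fin.val_rev]
    omega
  have hm : Fin.rev m = m := by
    apply Fin.ext
    rw [hvrev]
    simp only [hmdef]
    omega
  have hfix : ∀ j : Fin n, Fin.rev j = j → j = m := by
    intro j h
    have h1 : (Fin.rev j).val = j.val := by rw [h]
    rw [hvrev] at h1
    apply Fin.ext
    simp only [hmdef]
    omega
  have hz0rev : Fin.rev z0 ≠ z0 := by
    intro h
    have h1 : (Fin.rev z0).val = z0.val := by rw [h]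
    rw [hvrev] at h1
    simp only [hz0] at h1
    omega
  -- rows are pairwise distinct
  have rowinj : Function.Injective (fun i => (fun j => L i j)) := by
    intro i i' h
    exact (hcol z0).injective (congrFun h z0)
  have revrowinj : Function.Injective (fun i => (fun j : Fin n => L i j.rev)) := by
    intro i i' h
    have h2 := congrFun h (Fin.rev z0)
    simp only [Fin.rev_rev] at h2
    exact (hcol z0).injective h2
  have h1card : S1.ncard = n := by
    have : S1 = Set.range (fun i => (fun j => L i j)) := by
      ext f
      simp only [hS1, Set.mem_setOf_eq, Set.mem_range, eq_comm]
    rw [this, ← Set.image_univ, Set.ncard_image_of_injective _ rowinj,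
      Set.ncard_univ, Nat.card_eq_fintype_card, Fintype.card_fin]
  have h3card : S3.ncard = n := by
    have : S3 = Set.range (fun i => (fun j => L i j.rev)) := by
      ext f
      simp only [hS3, Set.mem_setOf_eq, Set.mem_range, eq_comm]
    rw [this, ← Set.image_univ, Set.ncard_image_of_injective _ revrowinj,
      Set.ncard_univ, Nat.card_eq_fintype_card, Fintype.card_fin]
  have hdisj : Disjoint S1 S3 := by
    rw [Set.disjoint_left]
    rintro f ⟨i, rfl⟩ ⟨i', hf⟩
    have hmm := congrFun hf m
    rw [hm] at hmm
    have hii : i = i' := (hcol m).injective hmm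
    subst hii
    have : z0 = Fin.rev z0 := (hrow i).injective (congrFun hf z0)
    exact hz0rev this.symm
  have hcard13 : (S1 ∪ S3).ncard = 2 * n := by
    rw [Set.ncard_union_eq hdisj, h1card, h3card]
    ring
  constructor
  · -- converse: 2n lines → symmetric or Hankel
    intro hU
    have hsub : S1 ∪ S3 ⊆ S1 ∪ S2 ∪ S3 ∪ S4 := by
      intro f hf
      rcases hf with hf | hf
      · exact Or.inl (Or.inl (Or.inl hf))
      · exact Or.inl (Or.inr hf)
    have hEq : S1 ∪ S3 = S1 ∪ S2 ∪ S3 ∪ S4 :=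
      Set.eq_of_subset_of_ncard_le hsub (by rw [hU, hcard13])
    -- every column is a row or a reversed row ⇒ P j ∨ Q j
    have hPQ : ∀ j, (∀ i, L i j = L j i) ∨ (∀ i, L i j = L j.rev i.rev) := by
      intro j
      have hmem : (fun i => L i j) ∈ S1 ∪ S3 := by
        rw [hEq]
        exact Or.inl (Or.inl (Or.inr ⟨j, rfl⟩))
      rcases hmem with ⟨s, hs⟩ | ⟨s, hs⟩
      · left
        have hsj : j = s := (hcol j).injective (congrFun hs j)
        subst hsj
        intro i
        exact congrFun hs i
      · right
        have hjs : j = Fin.rev s := (hrow s).injective (congrFun hs s)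
        intro i
        have := congrFun hs i
        rw [this, hjs, Fin.rev_rev]
    have hclash : (∀ i, L i m = L m i) → (∀ i, L i m = L m i.rev) → False := by
      intro hP hQ
      have h1 : L m z0 = L m z0.rev := by rw [← hP z0, hQ z0]
      exact hz0rev ((hrow m).injective h1).symm
    rcases hPQ m with hPm | hQm
    · -- center column symmetric ⇒ all symmetric
      left
      intro i j
      rcases hPQ j with h | h
      · exact h i
      · exfalso
        have h1 : L m j = L m j.rev := by
          rw [h m, hm, hPm j.rev]
        have h2 : j = m := hfix j ((hrow m).injective h1).symm
        subst h2
        refine hclash hPm ?_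
        intro i'
        rw [h i', hm]
    · -- center column Hankel ⇒ all Hankel
      right
      have hQm' : ∀ i, L i m = L m i.rev := by
        intro i
        rw [hQm i, hm]
      intro i j
      rcases hPQ j with h | h
      · exfalso
        have h1 : L m j = L m j.rev := by
          rw [← hQm' j]
          exact h m
        have h2 : j = m := hfix j ((hrow m).injective h1).symm
        subst h2
        exact hclash h hQm'
      · exact h i
  · -- forward: symmetric or Hankel ⇒ 2n lines
    intro hsymh
    rcases hsymh with hsym | hhank
    · have e2 : S2 = S1 := by
        ext f
        constructor
        · rintro ⟨j, rfl⟩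
          exact ⟨j, funext fun i => hsym i j⟩
        · rintro ⟨i, rfl⟩
          exact ⟨i, funext fun x => (hsym x i).symm⟩
      have e4 : S4 = S3 := by
        ext f
        constructor
        · rintro ⟨j, rfl⟩
          exact ⟨j, funext fun i => hsym i.rev j⟩
        · rintro ⟨i, rfl⟩
          exact ⟨i, funext fun x => (hsym x.rev i).symm⟩
      rw [e2, e4, Set.union_self, Set.union_assoc, Set.union_self]
      exact hcard13
    · have e2 : S2 = S3 := by
        ext f
        constructor
        · rintro ⟨j, rfl⟩
          refine ⟨j.rev, funext fun i => ?_⟩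
          rw [hhank i j]
        · rintro ⟨i, rfl⟩
          refine ⟨i.rev, funext fun x => ?_⟩
          rw [hhank x i.rev, Fin.rev_rev]
      have e4 : S4 = S1 := by
        ext f
        constructor
        · rintro ⟨j, rfl⟩
          refine ⟨j.rev, funext fun i => ?_⟩
          rw [hhank i.rev j, Fin.rev_rev]
        · rintro ⟨i, rfl⟩
          refine ⟨i.rev, funext fun x => ?_⟩
          rw [hhank x.rev i.rev, Fin.rev_rev, Fin.rev_rev]
      rw [e2, e4]
      have : S1 ∪ S3 ∪ S3 ∪ S1 = S1 ∪ S3 := by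
        ext f
        simp only [Set.mem_union]
        tauto
      rw [this]
      exact hcard13
end
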